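/- Let γ ∈ Ĥ_i with offset ρ = ρ(γ) and let j, k, l ≥ i. Then J_γ(κ^j, κ^k, κ^l) ≡ J(j,k,l)·κ^{j+k+l+2ρ} mod 𝔭^{j+k+l+2ρ+1}. -/

import Mathlib

/-!
Setting: `p ≥ 5` prime, `K = ℚ_p(θ)` with `θ` a primitive `p`-th root of unity,
`O` the ring of integers (maximal order) of `K`, i.e. the integral closure of
`ℤ_p` in `K`, and `𝔭` its unique maximal ideal, generated by `κ = θ - 1`,
so that `𝔭^n = κ^n · O` (also for `n : ℤ`).
-/

/-- The maximal order `O` of `K`: the integral closure of `ℤ_p` in `K`. -/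
noncomputable def RO (p : ℕ) [Fact p.Prime] (K : Type) [Field K] [Algebra ℤ_[p] K] :
    Subalgebra ℤ_[p] K :=
  integralClosure ℤ_[p] K

/-- The ideal `𝔭^n = κ^n · O` (for `n : ℤ`), where `κ = θ - 1`;
membership `x ∈ 𝔭^n` is encoded as `κ^(-n) * x ∈ O`. -/
def Pp (p : ℕ) [Fact p.Prime] (K : Type) [Field K] [Algebra ℤ_[p] K]
    (θ : K) (n : ℤ) : Submodule ℤ_[p] K where
  carrier := {x : K | (θ - 1) ^ (-n) * x ∈ RO p K}
  add_mem' := by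
    intro a b ha hb
    simp only [Set.mem_setOf_eq, mul_add] at *
    exact add_mem ha hb
  zero_mem' := by
    simp only [Set.mem_setOf_eq, mul_zero]
    exact zero_mem _
  smul_mem' := by
    intro c x hx
    simp only [Set.mem_setOf_eq, Algebra.smul_def] at *
    rw [mul_left_comm]
    exact mul_mem (Subalgebra.algebraMap_mem _ c) hx

/-- `γ ∈ H_i`: (the restriction to `𝔭^i × 𝔭^i` of) `γ` is a `ℤ_p`-bilinear
alternating map `𝔭^i × 𝔭^i → 𝔭^(2i+1)` which is `θ`-equivariant for the
diagonal action. -/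
structure MemH (p : ℕ) [Fact p.Prime] (K : Type) [Field K] [Algebra ℤ_[p] K]
    (θ : K) (i : ℕ) (γ : K → K → K) : Prop where
  maps_into : ∀ x ∈ Pp p K θ i, ∀ y ∈ Pp p K θ i, γ x y ∈ Pp p K θ (2 * i + 1)
  add_left : ∀ x ∈ Pp p K θ i, ∀ x' ∈ Pp p K θ i, ∀ y ∈ Pp p K θ i,
    γ (x + x') y = γ x y + γ x' y
  add_right : ∀ x ∈ Pp p K θ i, ∀ y ∈ Pp p K θ i, ∀ y' ∈ Pp p K θ i,
    γ x (y + y') = γ x y + γ x y'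
  smul_left : ∀ (c : ℤ_[p]), ∀ x ∈ Pp p K θ i, ∀ y ∈ Pp p K θ i,
    γ (c • x) y = c • γ x y
  smul_right : ∀ (c : ℤ_[p]), ∀ x ∈ Pp p K θ i, ∀ y ∈ Pp p K θ i,
    γ x (c • y) = c • γ x y
  alternating : ∀ x ∈ Pp p K θ i, γ x x = 0
  theta_equiv : ∀ x ∈ Pp p K θ i, ∀ y ∈ Pp p K θ i, γ (θ * x) (θ * y) = θ * γ x y

/-- `γ ∈ Ĥ_i`: `γ ∈ H_i` and `γ` is surjective onto `𝔭^(2i+1)`,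
i.e. the `ℤ_p`-span of the values of `γ` on `𝔭^i ∧ 𝔭^i` is all of `𝔭^(2i+1)`. -/
structure MemHhat (p : ℕ) [Fact p.Prime] (K : Type) [Field K] [Algebra ℤ_[p] K]
    (θ : K) (i : ℕ) (γ : K → K → K) extends MemH p K θ i γ : Prop where
  surj : ∀ z ∈ Pp p K θ (2 * i + 1),
    z ∈ Submodule.span ℤ_[p] {w : K | ∃ x ∈ Pp p K θ i, ∃ y ∈ Pp p K θ i, γ x y = w}

/-- The Jacobi element `J_γ(u,v,w) = γ(γ(u∧v)∧w) + γ(γ(v∧w)∧u) + γ(γ(w∧u)∧v)`. -/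
def Jg (K : Type) [Field K] (γ : K → K → K) (u v w : K) : K :=
  γ (γ u v) w + γ (γ v w) u + γ (γ w u) v

/-- The ideal `J(γ)` of `O` generated by the Jacobi elements
`J_γ(u,v,w)` for `u, v, w ∈ 𝔭^i` (encoded as the set of `O`-linear
combinations of Jacobi elements). -/
def JIdealSet (p : ℕ) [Fact p.Prime] (K : Type) [Field K] [Algebra ℤ_[p] K]
    (θ : K) (i : ℕ) (γ : K → K → K) : Set K :=
  {z : K | ∃ (n : ℕ) (c s : Fin n → K), (∀ t, c t ∈ RO p K) ∧
    (∀ t, ∃ u ∈ Pp p K θ i, ∃ v ∈ Pp p K θ i, ∃ w ∈ Pp p K θ i, Jg K γ u v w = s t) ∧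
    z = ∑ t, c t * s t}

section Helpers

variable {p : ℕ} [Fact p.Prime] {K : Type} [Field K] [Algebra ℤ_[p] K] {θ : K}

theorem mem_Pp_iff {x : K} {n : ℤ} :
    x ∈ Pp p K θ n ↔ (θ - 1) ^ (-n) * x ∈ RO p K := Iff.rfl

theorem kappa_mem (hθp : θ ^ p = 1) : θ - 1 ∈ RO p K := by
  have hθ : θ ∈ RO p K := by
    refine ⟨Polynomial.X ^ p - Polynomial.C (1 : ℤ_[p]), ?_, ?_⟩
    · exact Polynomial.monic_X_pow_sub_C 1 (Fact.out : p.Prime).ne_zero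
    · simp [Polynomial.eval₂_sub, Polynomial.eval₂_X_pow, hθp]
  exact sub_mem hθ (one_mem _)

theorem zpow_mem_RO (hθp : θ ^ p = 1) {a : ℤ} (ha : 0 ≤ a) :
    (θ - 1) ^ a ∈ RO p K := by
  lift a to ℕ using ha
  rw [zpow_natCast]
  exact pow_mem (kappa_mem hθp) a

theorem zpow_mem_Pp (hθp : θ ^ p = 1) (hθ1 : θ ≠ 1) {a b : ℤ} (hba : b ≤ a) :
    (θ - 1) ^ a ∈ Pp p K θ b := by
  have hκ : θ - 1 ≠ 0 := sub_ne_zero.mpr hθ1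
  rw [mem_Pp_iff, ← zpow_add₀ hκ]
  exact zpow_mem_RO hθp (by omega)

theorem Pp_mono (hθp : θ ^ p = 1) (hθ1 : θ ≠ 1) {a b : ℤ} (hab : a ≤ b) :
    Pp p K θ b ≤ Pp p K θ a := by
  intro x hx
  have hκ : θ - 1 ≠ 0 := sub_ne_zero.mpr hθ1
  rw [mem_Pp_iff] at hx ⊢
  have : (θ - 1) ^ (-a) * x = (θ - 1) ^ (b - a) * ((θ - 1) ^ (-b) * x) := by
    rw [← mul_assoc, ← zpow_add₀ hκ]; ring_nf
  rw [this]
  exact mul_mem (zpow_mem_RO hθp (by omega)) hx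

theorem RO_mul_Pp {c x : K} {n : ℤ} (hc : c ∈ RO p K) (hx : x ∈ Pp p K θ n) :
    c * x ∈ Pp p K θ n := by
  rw [mem_Pp_iff] at hx ⊢
  rw [mul_left_comm]
  exact mul_mem hc hx

theorem natCast_mem_RO (n : ℕ) : (n : K) ∈ RO p K := by
  rw [show ((n : K)) = algebraMap ℤ_[p] K n by simp]
  exact Subalgebra.algebraMap_mem _ _

theorem intCast_mem_RO (n : ℤ) : (n : K) ∈ RO p K := by
  rw [show ((n : K)) = algebraMap ℤ_[p] K n by simp]
  exact Subalgebra.algebraMap_mem _ _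

theorem Pp_mem_RO (hθp : θ ^ p = 1) (hθ1 : θ ≠ 1) {x : K} {n : ℤ} (hn : 0 ≤ n)
    (hx : x ∈ Pp p K θ n) : x ∈ RO p K := by
  rw [mem_Pp_iff] at hx
  have hκ : θ - 1 ≠ 0 := sub_ne_zero.mpr hθ1
  have h : x = (θ - 1) ^ n * ((θ - 1) ^ (-n) * x) := by
    rw [← mul_assoc, ← zpow_add₀ hκ]; simp
  rw [h]
  exact mul_mem (zpow_mem_RO hθp hn) hx

end Helpers
section Helpers2

variable {p : ℕ} [Fact p.Prime] {K : Type} [Field K] [Algebra ℤ_[p] K] {θ : K}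

theorem theta_mem_RO (hθp : θ ^ p = 1) : θ ∈ RO p K := by
  have := kappa_mem (K := K) hθp
  have h1 : (1 : K) ∈ RO p K := one_mem _
  have := add_mem this h1
  simpa using this

theorem p_eq_kappa_mul (hθp : θ ^ p = 1) (hθ1 : θ ≠ 1) :
    ∃ u ∈ RO p K, (p : K) = (θ - 1) * u := by
  have hκ : θ - 1 ≠ 0 := sub_ne_zero.mpr hθ1
  have hsum : ∑ t ∈ Finset.range p, θ ^ t = 0 := by
    have h := geom_sum_mul θ p
    rw [hθp, sub_self] at h
    rcases mul_eq_zero.mp h with h' | h'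
    · exact h'
    · exact absurd h' hκ
  refine ⟨-∑ t ∈ Finset.range p, ∑ s ∈ Finset.range t, θ ^ s, ?_, ?_⟩
  · exact neg_mem (sum_mem fun t _ => sum_mem fun s _ =>
      pow_mem (theta_mem_RO hθp) s)
  · have key : (θ - 1) * -∑ t ∈ Finset.range p, ∑ s ∈ Finset.range t, θ ^ s
        = ∑ t ∈ Finset.range p, (1 - θ ^ t) := by
      rw [mul_neg, Finset.mul_sum, ← Finset.sum_neg_distrib]
      refine Finset.sum_congr rfl fun t _ => ?_
      rw [mul_comm, geom_sum_mul]
      ring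
    rw [key, Finset.sum_sub_distrib, hsum]
    simp
end Helpers2
section Helpers3

variable {p : ℕ} [Fact p.Prime] {K : Type} [Field K] [Algebra ℤ_[p] K] {θ : K}

theorem p_mul_mem_Pp (hθp : θ ^ p = 1) (hθ1 : θ ≠ 1) {x : K} {n : ℤ}
    (hx : x ∈ Pp p K θ n) : (p : K) * x ∈ Pp p K θ (n + 1) := by
  obtain ⟨u, hu, hpu⟩ := p_eq_kappa_mul (K := K) hθp hθ1
  have hκ : θ - 1 ≠ 0 := sub_ne_zero.mpr hθ1
  rw [mem_Pp_iff] at hx ⊢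
  have h : (θ - 1) ^ (-(n + 1)) * ((p : K) * x) = u * ((θ - 1) ^ (-n) * x) := by
    rw [hpu, show (-(n + 1)) = (-n) + (-1) by ring, zpow_add₀ hκ, zpow_neg_one]
    have h2 : (θ - 1 : K)⁻¹ * (θ - 1) = 1 := inv_mul_cancel₀ hκ
    linear_combination ((θ - 1) ^ (-n) * u * x) * h2
  rw [h]
  exact mul_mem hu hx

theorem zpow_mem_RO_of_inv (hθp : θ ^ p = 1) (hinv : (θ - 1)⁻¹ ∈ RO p K)
    (z : ℤ) : (θ - 1) ^ z ∈ RO p K := by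
  rcases le_or_gt 0 z with h | h
  · exact zpow_mem_RO hθp h
  · have : (θ - 1) ^ z = ((θ - 1)⁻¹) ^ ((-z).toNat) := by
      rw [inv_pow, ← zpow_natCast, Int.toNat_of_nonneg (by omega), ← zpow_neg, neg_neg]
    rw [this]
    exact pow_mem hinv _

/-- Degenerate case: if `κ⁻¹ ∈ O` then `O ⊆ 𝔭^n` for every `n`. -/
theorem RO_le_Pp (hθp : θ ^ p = 1) (hinv : (θ - 1)⁻¹ ∈ RO p K)
    {x : K} (hx : x ∈ RO p K) (n : ℤ) : x ∈ Pp p K θ n := by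
  rw [mem_Pp_iff]
  exact mul_mem (zpow_mem_RO_of_inv hθp hinv (-n)) hx

end Helpers3
section Helpers4

variable {p : ℕ} [Fact p.Prime] {K : Type} [Field K] [Algebra ℤ_[p] K] {θ : K}

theorem gamma_mem (hθp : θ ^ p = 1) (hθ1 : θ ≠ 1) {i : ℕ} {γ : K → K → K}
    {ρf : ℕ → ℕ → ℤ}
    (hρf : ∀ j k : ℕ, i ≤ j → i ≤ k →
      Submodule.span ℤ_[p] {w : K | ∃ x ∈ Pp p K θ j, ∃ y ∈ Pp p K θ k, γ x y = w}
        = Pp p K θ ((j : ℤ) + k + ρf j k))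
    {ρ : ℤ} (hρ : IsLeast {z : ℤ | ∃ j k : ℕ, i ≤ j ∧ i ≤ k ∧ ρf j k = z} ρ)
    {a b : ℤ} (ha : (i : ℤ) ≤ a) (hb : (i : ℤ) ≤ b)
    {x y : K} (hx : x ∈ Pp p K θ a) (hy : y ∈ Pp p K θ b) :
    γ x y ∈ Pp p K θ (a + b + ρ) := by
  have ha0 : 0 ≤ a := le_trans (Int.natCast_nonneg i) ha
  have hb0 : 0 ≤ b := le_trans (Int.natCast_nonneg i) hb
  have haa : ((a.toNat : ℤ)) = a := Int.toNat_of_nonneg ha0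
  have hbb : ((b.toNat : ℤ)) = b := Int.toNat_of_nonneg hb0
  have hmem : γ x y ∈ Submodule.span ℤ_[p]
      {w : K | ∃ x ∈ Pp p K θ a.toNat, ∃ y ∈ Pp p K θ b.toNat, γ x y = w} :=
    Submodule.subset_span ⟨x, by rw [haa]; exact hx, y, by rw [hbb]; exact hy, rfl⟩
  rw [hρf a.toNat b.toNat (by omega) (by omega)] at hmem
  have hle : ρ ≤ ρf a.toNat b.toNat := hρ.2 ⟨a.toNat, b.toNat, by omega, by omega, rfl⟩
  refine Pp_mono hθp hθ1 ?_ hmem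
  omega

end Helpers4
section Helpers5

variable {p : ℕ} [Fact p.Prime] {K : Type} [Field K] [Algebra ℤ_[p] K] {θ : K}

theorem key_term (hθp : θ ^ p = 1) (hθ1 : θ ≠ 1)
    (hinv : (θ - 1)⁻¹ ∉ RO p K)
    {i : ℕ} {γ : K → K → K} (hγ : MemH p K θ i γ)
    {ρf : ℕ → ℕ → ℤ}
    (hρf : ∀ j k : ℕ, i ≤ j → i ≤ k →
      Submodule.span ℤ_[p] {w : K | ∃ x ∈ Pp p K θ j, ∃ y ∈ Pp p K θ k, γ x y = w}
        = Pp p K θ ((j : ℤ) + k + ρf j k))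
    {ρ : ℤ} (hρ : IsLeast {z : ℤ | ∃ j k : ℕ, i ≤ j ∧ i ≤ k ∧ ρf j k = z} ρ)
    {A : ℤ → ℤ → ℕ}
    (hA : ∀ j k : ℤ, (i : ℤ) ≤ j → (i : ℤ) ≤ k → A j k < p ∧
      γ ((θ - 1) ^ j) ((θ - 1) ^ k) - (A j k : K) * (θ - 1) ^ (j + k + ρ)
        ∈ Pp p K θ (j + k + ρ + 1))
    (hAlt : ∀ j k : ℤ, A j k < p)
    {a b c : ℤ} (ha : (i : ℤ) ≤ a) (hb : (i : ℤ) ≤ b) (hc : (i : ℤ) ≤ c) :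
    γ (γ ((θ - 1) ^ a) ((θ - 1) ^ b)) ((θ - 1) ^ c)
      - (A a b : K) * (A (a + b + ρ) c : K) * (θ - 1) ^ (a + b + c + 2 * ρ)
      ∈ Pp p K θ (a + b + c + 2 * ρ + 1) := by
  have hκ : θ - 1 ≠ 0 := sub_ne_zero.mpr hθ1
  have hκa : (θ - 1) ^ a ∈ Pp p K θ (i : ℤ) := zpow_mem_Pp hθp hθ1 ha
  have hκb : (θ - 1) ^ b ∈ Pp p K θ (i : ℤ) := zpow_mem_Pp hθp hθ1 hb
  have hκcI : (θ - 1) ^ c ∈ Pp p K θ (i : ℤ) := zpow_mem_Pp hθp hθ1 hc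
  have hκc : (θ - 1) ^ c ∈ Pp p K θ c := zpow_mem_Pp hθp hθ1 le_rfl
  have hg21 : γ ((θ - 1) ^ a) ((θ - 1) ^ b) ∈ Pp p K θ (2 * (i : ℤ) + 1) := by
    have := hγ.maps_into _ hκa _ hκb
    refine Pp_mono hθp hθ1 ?_ this
    omega
  have hAab := (hA a b ha hb).2
  by_cases him : (i : ℤ) ≤ a + b + ρ
  · -- main case
    have hκm : (θ - 1) ^ (a + b + ρ) ∈ Pp p K θ (i : ℤ) := zpow_mem_Pp hθp hθ1 him
    have heI : γ ((θ - 1) ^ a) ((θ - 1) ^ b)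
        - (A a b : K) * (θ - 1) ^ (a + b + ρ) ∈ Pp p K θ (i : ℤ) :=
      Pp_mono hθp hθ1 (by omega) hAab
    have hsm : ((A a b : ℤ_[p])) • ((θ - 1) ^ (a + b + ρ)) ∈ Pp p K θ (i : ℤ) :=
      Submodule.smul_mem _ _ hκm
    have hcast : ∀ x : K, ((A a b : ℤ_[p])) • x = (A a b : K) * x := fun x => by
      rw [Algebra.smul_def, map_natCast]
    have hdecomp : γ ((θ - 1) ^ a) ((θ - 1) ^ b)
        = ((A a b : ℤ_[p])) • ((θ - 1) ^ (a + b + ρ))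
          + (γ ((θ - 1) ^ a) ((θ - 1) ^ b) - (A a b : K) * (θ - 1) ^ (a + b + ρ)) := by
      rw [hcast]; ring
    have heq : γ (γ ((θ - 1) ^ a) ((θ - 1) ^ b)) ((θ - 1) ^ c)
        = (A a b : K) * γ ((θ - 1) ^ (a + b + ρ)) ((θ - 1) ^ c)
          + γ (γ ((θ - 1) ^ a) ((θ - 1) ^ b)
              - (A a b : K) * (θ - 1) ^ (a + b + ρ)) ((θ - 1) ^ c) := by
      conv_lhs => rw [hdecomp]
      rw [hγ.add_left _ hsm _ heI _ hκcI, hγ.smul_left _ _ hκm _ hκcI, hcast]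
    have h1 : (A a b : K) * (γ ((θ - 1) ^ (a + b + ρ)) ((θ - 1) ^ c)
        - (A (a + b + ρ) c : K) * (θ - 1) ^ ((a + b + ρ) + c + ρ))
        ∈ Pp p K θ ((a + b + ρ) + c + ρ + 1) :=
      RO_mul_Pp (natCast_mem_RO _) (hA (a + b + ρ) c him hc).2
    have h2 : γ (γ ((θ - 1) ^ a) ((θ - 1) ^ b)
        - (A a b : K) * (θ - 1) ^ (a + b + ρ)) ((θ - 1) ^ c)
        ∈ Pp p K θ ((a + b + ρ + 1) + c + ρ) :=
      gamma_mem hθp hθ1 hρf hρ (by omega) hc hAab hκc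
    have hfin : γ (γ ((θ - 1) ^ a) ((θ - 1) ^ b)) ((θ - 1) ^ c)
        - (A a b : K) * (A (a + b + ρ) c : K) * (θ - 1) ^ (a + b + c + 2 * ρ)
        = (A a b : K) * (γ ((θ - 1) ^ (a + b + ρ)) ((θ - 1) ^ c)
            - (A (a + b + ρ) c : K) * (θ - 1) ^ ((a + b + ρ) + c + ρ))
          + γ (γ ((θ - 1) ^ a) ((θ - 1) ^ b)
              - (A a b : K) * (θ - 1) ^ (a + b + ρ)) ((θ - 1) ^ c) := by
      rw [heq, show a + b + c + 2 * ρ = (a + b + ρ) + c + ρ by ring]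
      ring
    rw [hfin]
    exact Submodule.add_mem _ (Pp_mono hθp hθ1 (by omega) h1)
      (Pp_mono hθp hθ1 (by omega) h2)
  · -- degenerate case: A a b = 0
    have hA0 : A a b = 0 := by
      by_contra hA0
      have h1 : (A a b : K) * (θ - 1) ^ (a + b + ρ) ∈ Pp p K θ (a + b + ρ + 1) := by
        have hexpr : (A a b : K) * (θ - 1) ^ (a + b + ρ)
            = γ ((θ - 1) ^ a) ((θ - 1) ^ b)
              - (γ ((θ - 1) ^ a) ((θ - 1) ^ b)
                - (A a b : K) * (θ - 1) ^ (a + b + ρ)) := by ring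
        rw [hexpr]
        exact Submodule.sub_mem _ (Pp_mono hθp hθ1 (by omega) hg21) hAab
      have h2 : (A a b : K) * (θ - 1)⁻¹ ∈ RO p K := by
        rw [mem_Pp_iff] at h1
        have heq2 : (θ - 1) ^ (-(a + b + ρ + 1)) * ((A a b : K) * (θ - 1) ^ (a + b + ρ))
            = (A a b : K) * (θ - 1)⁻¹ := by
          rw [mul_left_comm, ← zpow_add₀ hκ,
            show (-(a + b + ρ + 1)) + (a + b + ρ) = -1 by ring, zpow_neg_one]
        rw [heq2] at h1
        exact h1
      have hpk : (p : K) * (θ - 1)⁻¹ ∈ RO p K := by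
        obtain ⟨w, hw, hpw⟩ := p_eq_kappa_mul (K := K) hθp hθ1
        rw [hpw, show (θ - 1) * w * (θ - 1)⁻¹ = w * ((θ - 1) * (θ - 1)⁻¹) by ring,
          mul_inv_cancel₀ hκ, mul_one]
        exact hw
      have hcop : IsCoprime ((A a b : ℤ)) ((p : ℤ)) := by
        rw [Int.isCoprime_iff_gcd_eq_one]
        have hlt := hAlt a b
        have : Nat.Coprime (A a b) p := by
          rw [Nat.coprime_comm]
          refine (Nat.Prime.coprime_iff_not_dvd Fact.out).mpr fun hdvd => ?_
          have := Nat.le_of_dvd (Nat.pos_of_ne_zero hA0) hdvd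
          omega
        simpa [Int.gcd] using this
      obtain ⟨u, v, huv⟩ := hcop
      apply hinv
      have hsplit : (θ - 1)⁻¹ = (u : K) * ((A a b : K) * (θ - 1)⁻¹)
          + (v : K) * ((p : K) * (θ - 1)⁻¹) := by
        have h1K : ((u * (A a b) + v * p : ℤ) : K) = 1 := by rw [huv]; norm_num
        push_cast at h1K
        calc (θ - 1)⁻¹ = ((u : K) * (A a b : K) + (v : K) * (p : K)) * (θ - 1)⁻¹ := by
              rw [h1K, one_mul]
          _ = (u : K) * ((A a b : K) * (θ - 1)⁻¹) + (v : K) * ((p : K) * (θ - 1)⁻¹) := by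
              ring
      rw [hsplit]
      exact add_mem (mul_mem (intCast_mem_RO u) h2) (mul_mem (intCast_mem_RO v) hpk)
    rw [hA0]
    simp only [Nat.cast_zero, zero_mul, sub_zero]
    have h3 : γ (γ ((θ - 1) ^ a) ((θ - 1) ^ b)) ((θ - 1) ^ c)
        ∈ Pp p K θ ((2 * (i : ℤ) + 1) + c + ρ) :=
      gamma_mem hθp hθ1 hρf hρ (by omega) hc hg21 hκc
    exact Pp_mono hθp hθ1 (by omega) h3
end Helpers5
theorem stmt_9 (p : ℕ) [Fact p.Prime] (hp5 : 5 ≤ p)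
    (K : Type) [Field K] [Algebra ℚ_[p] K] [Algebra ℤ_[p] K]
    [IsScalarTower ℤ_[p] ℚ_[p] K]
    (θ : K) (hθ : IsPrimitiveRoot θ p)
    (hgen : Algebra.adjoin ℚ_[p] {θ} = ⊤)
    (i : ℕ) (γ : K → K → K) (hγ : MemHhat p K θ i γ)
    -- `ρ(j,k)` is defined by `γ(𝔭^j ∧ 𝔭^k) = 𝔭^(j+k+ρ(j,k))`
    (ρf : ℕ → ℕ → ℤ)
    (hρf : ∀ j k : ℕ, i ≤ j → i ≤ k →
      Submodule.span ℤ_[p] {w : K | ∃ x ∈ Pp p K θ j, ∃ y ∈ Pp p K θ k, γ x y = w}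
        = Pp p K θ ((j : ℤ) + k + ρf j k))
    -- the offset `ρ(γ) = min {ρ(j,k) | j, k ≥ i}`
    (ρ : ℤ) (hρ : IsLeast {z : ℤ | ∃ j k : ℕ, i ≤ j ∧ i ≤ k ∧ ρf j k = z} ρ)
    -- `a(j,k) ∈ {0,…,p-1}` is defined for `j, k ≥ i` by
    -- `γ(κ^j ∧ κ^k) ≡ a(j,k)·κ^(j+k+ρ) mod 𝔭^(j+k+ρ+1)`, and is extended to
    -- all integer arguments by periodicity `a(j+d,k) = a(j,k) = a(j,k+d)`
    (A : ℤ → ℤ → ℕ)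
    (hA : ∀ j k : ℤ, (i : ℤ) ≤ j → (i : ℤ) ≤ k → A j k < p ∧
      γ ((θ - 1) ^ j) ((θ - 1) ^ k) - (A j k : K) * (θ - 1) ^ (j + k + ρ)
        ∈ Pp p K θ (j + k + ρ + 1))
    (hAlt : ∀ j k : ℤ, A j k < p)
    (hAper : ∀ j k : ℤ, A (j + (p - 1)) k = A j k ∧ A j (k + (p - 1)) = A j k)
    -- `J(j,k,l) ∈ {0,…,p-1}` is defined by
    -- `J(j,k,l) ≡ a(j,k)a(j+k+ρ,l) + a(k,l)a(k+l+ρ,j) + a(l,j)a(l+j+ρ,k) mod p`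
    (JF : ℤ → ℤ → ℤ → ℕ)
    (hJF : ∀ j k l : ℤ, (i : ℤ) ≤ j → (i : ℤ) ≤ k → (i : ℤ) ≤ l →
      JF j k l < p ∧
      (JF j k l : ZMod p) = (A j k : ZMod p) * (A (j + k + ρ) l : ZMod p)
        + (A k l : ZMod p) * (A (k + l + ρ) j : ZMod p)
        + (A l j : ZMod p) * (A (l + j + ρ) k : ZMod p)) :
    -- `J_γ(κ^j, κ^k, κ^l) ≡ J(j,k,l)·κ^(j+k+l+2ρ) mod 𝔭^(j+k+l+2ρ+1)`
    ∀ j k l : ℤ, (i : ℤ) ≤ j → (i : ℤ) ≤ k → (i : ℤ) ≤ l →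
      Jg K γ ((θ - 1) ^ j) ((θ - 1) ^ k) ((θ - 1) ^ l)
          - (JF j k l : K) * (θ - 1) ^ (j + k + l + 2 * ρ)
        ∈ Pp p K θ (j + k + l + 2 * ρ + 1) := by
  intro j k l hj hk hl
  have hθp : θ ^ p = 1 := hθ.pow_eq_one
  have hθ1 : θ ≠ 1 := hθ.ne_one (by omega)
  have hκ : θ - 1 ≠ 0 := sub_ne_zero.mpr hθ1
  by_cases hinv : (θ - 1)⁻¹ ∈ RO p K
  · -- degenerate case: `κ` is a unit of `O`, everything is in every `𝔭^n`
    apply RO_le_Pp hθp hinv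
    refine sub_mem ?_ (mul_mem (natCast_mem_RO _) (zpow_mem_RO_of_inv hθp hinv _))
    have hterm : ∀ a b c : ℤ, (i : ℤ) ≤ a → (i : ℤ) ≤ b → (i : ℤ) ≤ c →
        γ (γ ((θ - 1) ^ a) ((θ - 1) ^ b)) ((θ - 1) ^ c) ∈ RO p K := by
      intro a b c ha hb hc
      have h1 : γ ((θ - 1) ^ a) ((θ - 1) ^ b) ∈ Pp p K θ (i : ℤ) :=
        Pp_mono hθp hθ1 (by omega)
          (hγ.maps_into _ (zpow_mem_Pp hθp hθ1 ha) _ (zpow_mem_Pp hθp hθ1 hb))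
      exact Pp_mem_RO hθp hθ1 (by omega)
        (hγ.maps_into _ h1 _ (zpow_mem_Pp hθp hθ1 hc))
    simp only [Jg]
    exact add_mem (add_mem (hterm j k l hj hk hl) (hterm k l j hk hl hj))
      (hterm l j k hl hj hk)
  · -- main case
    have T1 := key_term hθp hθ1 hinv hγ.toMemH hρf hρ hA hAlt hj hk hl
    have T2 := key_term hθp hθ1 hinv hγ.toMemH hρf hρ hA hAlt hk hl hj
    have T3 := key_term hθp hθ1 hinv hγ.toMemH hρf hρ hA hAlt hl hj hk
    rw [show k + l + j + 2 * ρ = j + k + l + 2 * ρ by ring] at T2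
    rw [show l + j + k + 2 * ρ = j + k + l + 2 * ρ by ring] at T3
    have Tsum := Submodule.add_mem _ (Submodule.add_mem _ T1 T2) T3
    have hJ := hJF j k l hj hk hl
    have hdvd : (p : ℤ) ∣ ((A j k * A (j + k + ρ) l + A k l * A (k + l + ρ) j
        + A l j * A (l + j + ρ) k : ℕ) : ℤ) - (JF j k l : ℤ) := by
      rw [← ZMod.intCast_zmod_eq_zero_iff_dvd]
      push_cast
      rw [hJ.2]
      ring
    obtain ⟨q, hq⟩ := hdvd
    have hq' : (A j k : K) * (A (j + k + ρ) l : K) + (A k l : K) * (A (k + l + ρ) j : K)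
        + (A l j : K) * (A (l + j + ρ) k : K) - (JF j k l : K) = (q : K) * (p : K) := by
      have := congrArg (fun z : ℤ => (z : K)) hq
      push_cast at this
      linear_combination this
    have Hadj : (q : K) * ((p : K) * (θ - 1) ^ (j + k + l + 2 * ρ))
        ∈ Pp p K θ (j + k + l + 2 * ρ + 1) :=
      RO_mul_Pp (intCast_mem_RO q)
        (p_mul_mem_Pp hθp hθ1 (zpow_mem_Pp hθp hθ1 le_rfl))
    have hfin : Jg K γ ((θ - 1) ^ j) ((θ - 1) ^ k) ((θ - 1) ^ l)
        - (JF j k l : K) * (θ - 1) ^ (j + k + l + 2 * ρ)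
        = γ (γ ((θ - 1) ^ j) ((θ - 1) ^ k)) ((θ - 1) ^ l)
              - (A j k : K) * (A (j + k + ρ) l : K) * (θ - 1) ^ (j + k + l + 2 * ρ)
            + (γ (γ ((θ - 1) ^ k) ((θ - 1) ^ l)) ((θ - 1) ^ j)
              - (A k l : K) * (A (k + l + ρ) j : K) * (θ - 1) ^ (j + k + l + 2 * ρ))
            + (γ (γ ((θ - 1) ^ l) ((θ - 1) ^ j)) ((θ - 1) ^ k)
              - (A l j : K) * (A (l + j + ρ) k : K) * (θ - 1) ^ (j + k + l + 2 * ρ))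
          + (q : K) * ((p : K) * (θ - 1) ^ (j + k + l + 2 * ρ)) := by
      unfold Jg
      linear_combination (θ - 1) ^ (j + k + l + 2 * ρ) * hq'
    rw [hfin]
    exact Submodule.add_mem _ Tsum Hadj
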